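/- Let G be a MAGIIAN whose MKBSC expansion G^K fulfills the PDK condition, and let R be an observable reachability objective in G with translation R^K in G^K. If {α_i}_{i∈Agt} with α_i : Obs_i → Act_i is a winning profile of observation-based memoryless strategies in G for R, then the profile of observation-based memoryless strategies {α_i ∘ ob_i}_{i∈Agt} is winning in G^K for R^K, where for each observation o^K_i ∈ Obs^K_i with common i-th component A, ob_i(o^K_i) is the unique observation o_i ∈ Obs_i with A ⊆ o_i. -/
import Mathlib


open Set

/-- A multi-agent game with imperfect information against Nature (MAGIIAN).
`obs i l` is the observation block of agent `i` containing location `l`;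
the axioms make the blocks of each agent a partition of the locations. -/
structure MAGIIAN (Agt Loc : Type) (Act : Agt → Type) where
  init : Loc
  trans : Loc → (∀ i, Act i) → Loc → Prop
  obs : Agt → Loc → Set Loc
  obs_mem : ∀ i l, l ∈ obs i l
  obs_eq : ∀ i l l', l' ∈ obs i l → obs i l' = obs i l

namespace MAGIIAN

variable {Agt Loc : Type} {Act : Agt → Type}

/-- `o` is an observation (block) of agent `i` in `G`. -/
def IsObs (G : MAGIIAN Agt Loc Act) (i : Agt) (o : Set Loc) : Prop :=
  ∃ l, o = G.obs i l

/-- Transition relation `Δ_i` of the projection `G|_i`. -/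
def projTrans (G : MAGIIAN Agt Loc Act) (i : Agt) (l : Loc) (a : Act i) (l' : Loc) : Prop :=
  ∃ σ : ∀ j, Act j, σ i = a ∧ G.trans l σ l'

/-- Transition relation `Δ^K_i` of the individual KBSC expansion `(G|_i)^K`. -/
def kTrans (G : MAGIIAN Agt Loc Act) (i : Agt) (s : Set Loc) (a : Act i) (s' : Set Loc) : Prop :=
  ∃ o : Set Loc, G.IsObs i o ∧ s' = {l' ∈ o | ∃ l ∈ s, G.projTrans i l a l'} ∧ s'.Nonempty

/-- Pruned joint transition relation `Δ^K` of the MKBSC expansion `G^K`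
(unrealisable transitions are removed). -/
def kTransJ (G : MAGIIAN Agt Loc Act) (s : Agt → Set Loc) (σ : ∀ i, Act i)
    (s' : Agt → Set Loc) : Prop :=
  (∀ i, G.kTrans i (s i) (σ i) (s' i)) ∧
    ∃ l ∈ (⋂ i, s i), ∃ l' ∈ (⋂ i, s' i), G.trans l σ l'

/-- The MKBSC expansion `G^K`, as a MAGIIAN over joint knowledge states;
agent `i`'s observation of a joint knowledge state is determined by its `i`-th component. -/
def expand (G : MAGIIAN Agt Loc Act) : MAGIIAN Agt (Agt → Set Loc) Act where
  init := fun _ => {G.init}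
  trans := G.kTransJ
  obs := fun i s => {s' | s' i = s i}
  obs_mem := fun _ _ => rfl
  obs_eq := by
    intro i s s' h
    simp only [Set.mem_setOf_eq] at h
    ext t
    simp [Set.mem_setOf_eq, h]

/-- Reachability from the initial location. -/
def Reachable (G : MAGIIAN Agt Loc Act) (l : Loc) : Prop :=
  Relation.ReflTransGen (fun x y => ∃ σ, G.trans x σ y) G.init l

/-- The MKBSC expansion `G^K` fulfills the perfect-distributed-knowledge (PDK) condition:
every reachable joint knowledge state has singleton component intersection. -/
def PDK (G : MAGIIAN Agt Loc Act) : Prop :=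
  ∀ s : Agt → Set Loc, G.expand.Reachable s → ∃ l : Loc, (⋂ i, s i) = {l}

/-- A full play, given as its sequences of locations and of joint actions. -/
def IsPlay (G : MAGIIAN Agt Loc Act) (l : ℕ → Loc) (σ : ℕ → ∀ i, Act i) : Prop :=
  l 0 = G.init ∧ ∀ k, G.trans (l k) (σ k) (l (k + 1))

/-- Observation history of agent `i` (list of observation blocks) up to time `k`. -/
def obsHist (G : MAGIIAN Agt Loc Act) (i : Agt) (l : ℕ → Loc) (k : ℕ) : List (Set Loc) :=
  (List.range (k + 1)).map fun j => G.obs i (l j)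

/-- Outcomes (location sequences) of a profile of observation-based
perfect-recall strategies. -/
def PROutcome (G : MAGIIAN Agt Loc Act) (α : ∀ i, List (Set Loc) → Act i)
    (l : ℕ → Loc) : Prop :=
  ∃ σ : ℕ → ∀ i, Act i, G.IsPlay l σ ∧ ∀ k i, σ k i = α i (G.obsHist i l k)

/-- Outcomes of a profile of observation-based memoryless strategies. -/
def MLOutcome (G : MAGIIAN Agt Loc Act) (α : ∀ i, Set Loc → Act i) (l : ℕ → Loc) : Prop :=
  ∃ σ : ℕ → ∀ i, Act i, G.IsPlay l σ ∧ ∀ k i, σ k i = α i (G.obs i (l k))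

/-- A play is winning for an observable reachability objective `R` iff some
agent at some point observes an observation in `R`. -/
def WinsReach (G : MAGIIAN Agt Loc Act) (R : Set (Set Loc)) (l : ℕ → Loc) : Prop :=
  ∃ i k, G.obs i (l k) ∈ R

/-- A play is winning for an observable safety objective `F` iff at every point
some agent observes an observation in `F`. -/
def WinsSafe (G : MAGIIAN Agt Loc Act) (F : Set (Set Loc)) (l : ℕ → Loc) : Prop :=
  ∀ k, ∃ i, G.obs i (l k) ∈ F

/-- `ob_i`: maps an observation block of `G^K` for agent `i` (all of whose members have the
same `i`-th component `A`) to the unique observation of `i` in `G` that includes `A`. -/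
def obMap (G : MAGIIAN Agt Loc Act) (i : Agt) (O : Set (Agt → Set Loc)) : Set Loc :=
  ⋃ s ∈ O, ⋃ l ∈ s i, G.obs i l

/-- The translated objective `R^K = {s ∈ S : ∃ i, ∃ o ∈ R ∩ Obs_i, s i ⊆ o}`,
as a set of joint knowledge states. -/
def transObj (G : MAGIIAN Agt Loc Act) (R : Set (Set Loc)) : Set (Agt → Set Loc) :=
  {s | ∃ i, ∃ o ∈ R, G.IsObs i o ∧ s i ⊆ o}

end MAGIIAN


namespace MAGIIAN

variable {Agt Loc : Type} {Act : Agt → Type}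

/-- If `G^K` fulfills the PDK condition and the profile `{α_i}` of observation-based
memoryless strategies is winning in `G` for the observable reachability objective `R`,
then the profile of observation-based memoryless strategies `{α_i ∘ ob_i}` is winning
in `G^K` for `R^K`. -/
theorem memoryless_strategy_preservation (G : MAGIIAN Agt Loc Act) (hPDK : G.PDK)
    (R : Set (Set Loc)) (hR : ∀ o ∈ R, ∃ i, G.IsObs i o)
    (α : ∀ i, Set Loc → Act i)
    (hwin : ∀ l, G.MLOutcome α l → G.WinsReach R l) :
    ∀ s : ℕ → Agt → Set Loc,
      G.expand.MLOutcome (fun i O => α i (G.obMap i O)) s →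
      ∃ k, s k ∈ G.transObj R := by
  rintro s ⟨σ, ⟨h0, hstep⟩, hσ⟩
  -- every s k is reachable in the expansion
  have hreach : ∀ k, G.expand.Reachable (s k) := by
    intro k
    induction k with
    | zero =>
      unfold Reachable; rw [h0]
    | succ k ih => exact ih.tail ⟨σ k, hstep k⟩
  -- PDK singletons
  choose L hL using fun k => hPDK (s k) (hreach k)
  have hLmem : ∀ k i, L k ∈ s k i := by
    intro k i
    have : L k ∈ ⋂ i, s k i := by rw [hL k]; exact rfl
    exact Set.mem_iInter.mp this i
  -- each component s k i lies within a single observation block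
  have hblock : ∀ k i, ∃ o, s k i ⊆ o ∧ ∃ l0, o = G.obs i l0 := by
    intro k i
    cases k with
    | zero =>
      refine ⟨G.obs i G.init, ?_, G.init, rfl⟩
      have : s 0 i = {G.init} := by rw [h0]; rfl
      rw [this]
      intro x hx; rw [hx]; exact G.obs_mem i G.init
    | succ k =>
      obtain ⟨o, ⟨l0, ho⟩, hs', _⟩ := (hstep k).1 i
      exact ⟨o, by rw [hs']; intro x hx; exact hx.1, l0, ho⟩
  -- all members of s k i have the same observation as L k
  have hobs : ∀ k i l, l ∈ s k i → G.obs i l = G.obs i (L k) := by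
    intro k i l hl
    obtain ⟨o, hsub, l0, rfl⟩ := hblock k i
    rw [G.obs_eq i l0 l (hsub hl), G.obs_eq i l0 (L k) (hsub (hLmem k i))]
  -- the obMap applied to the expansion observation gives obs of L k
  have hkey : ∀ k i, G.obMap i (G.expand.obs i (s k)) = G.obs i (L k) := by
    intro k i
    apply Set.eq_of_subset_of_subset
    · intro x hx
      simp only [obMap, Set.mem_iUnion] at hx
      obtain ⟨s', hs', l, hl, hx⟩ := hx
      have : s' i = s k i := hs'
      rw [this] at hl
      rwa [hobs k i l hl] at hx
    · intro x hx
      simp only [obMap, Set.mem_iUnion]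
      exact ⟨s k, rfl, L k, hLmem k i, hx⟩
  -- L is a play
  have hL0 : L 0 = G.init := by
    have : G.init ∈ ⋂ i, s 0 i := by
      apply Set.mem_iInter.mpr
      intro i
      have : s 0 i = {G.init} := by rw [h0]; rfl
      rw [this]; exact rfl
    rw [hL 0] at this
    exact this.symm
  have htrans : ∀ k, G.trans (L k) (σ k) (L (k + 1)) := by
    intro k
    obtain ⟨l, hl, l', hl', ht⟩ := (hstep k).2
    rw [hL k] at hl; rw [hL (k + 1)] at hl'
    rwa [← hl, ← hl']
  -- L is an outcome of α in G
  have hout : G.MLOutcome α L := by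
    refine ⟨σ, ⟨hL0, htrans⟩, ?_⟩
    intro k i
    have := hσ k i
    simp only at this
    rw [this, hkey k i]
  obtain ⟨i, k, hmem⟩ := hwin L hout
  refine ⟨k, i, G.obs i (L k), hmem, ⟨L k, rfl⟩, ?_⟩
  intro l hl
  rw [← hobs k i l hl]
  exact G.obs_mem i l

end MAGIIAN
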